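/- arXiv:2310.04327 — 4 statements merged into one kernel-verified Lean document; each statement's English description precedes it below -/
import Mathlib

section
/- In the best-first search over the cost-tuple space ℕ^k starting from (1,...,1), where children are single-coordinate increments, every tuple (i_1,...,i_k) with all i_j ≥ 1 is eventually popped, provided the cost function w is strictly monotone along the child relation and only finitely many tuples have w-value below any given bound. -/
/-- completeness of the best-first search over ℕ^k starting from
(1,...,1) with deduplicated insertion of children (single-coordinate
increments): if the cost `w` is strictly monotone along the child relation and
only finitely many tuples have `w`-value below any bound, then every tuple with
all coordinates ≥ 1 is eventually popped. -/
theorem stmt_3 (k : ℕ) (w : (Fin k → ℕ) → ℝ)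
    (hmono : ∀ (n : Fin k → ℕ) (j : Fin k),
      w n < w (Function.update n j (n j + 1)))
    (hfin : ∀ B : ℝ, {n : Fin k → ℕ | w n ≤ B}.Finite)
    (pushed : ℕ → Set (Fin k → ℕ)) (popped : ℕ → Fin k → ℕ)
    (h0 : pushed 0 = {fun _ => 1})
    (hpush : ∀ t, pushed (t + 1) = pushed t ∪
      {c | ∃ j : Fin k, c = Function.update (popped t) j (popped t j + 1)})
    (hmem : ∀ t, popped t ∈ pushed t)
    (hnodup : ∀ t, ∀ s < t, popped s ≠ popped t)
    (hmin : ∀ t, ∀ m ∈ pushed t, (∀ s < t, popped s ≠ m) →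
      w (popped t) ≤ w m) :
    ∀ n : Fin k → ℕ, (∀ j, 1 ≤ n j) → ∃ t, popped t = n := by
  have hmonoP : ∀ s t, s ≤ t → pushed s ⊆ pushed t := by
    intro s t hst
    induction t with
    | zero => simp [Nat.le_zero.mp hst]
    | succ t ih =>
      rcases Nat.lt_or_ge s (t + 1) with h | h
      · exact (ih (Nat.lt_succ_iff.mp h)).trans
          (by rw [hpush]; exact Set.subset_union_left)
      · have : s = t + 1 := le_antisymm hst h
        subst this; exact subset_rfl
  have hinj : Function.Injective popped := by
    intro a b hab
    by_contra hne
    rcases Nat.lt_or_ge a b with h | h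
    · exact hnodup b a h hab
    · exact hnodup a b (lt_of_le_of_ne h (Ne.symm hne)) hab.symm
  have hpop : ∀ m t0, m ∈ pushed t0 → ∃ t, popped t = m := by
    intro m t0 hm
    by_contra hno
    push_neg at hno
    have hle : ∀ t, w (popped (t0 + t)) ≤ w m := by
      intro t
      exact hmin (t0 + t) m (hmonoP t0 (t0 + t) (Nat.le_add_right _ _) hm)
        (fun s _ => hno s)
    have hInf : Set.Infinite {n : Fin k → ℕ | w n ≤ w m} := by
      apply Set.infinite_of_injective_forall_mem
        (f := fun t : ℕ => popped (t0 + t))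
      · intro a b hab
        have := hinj hab
        omega
      · intro t; exact hle t
    exact hInf (hfin (w m))
  have key : ∀ S : ℕ, ∀ n : Fin k → ℕ, (∀ j, 1 ≤ n j) → (∑ j, n j) = S →
      ∃ t, popped t = n := by
    intro S
    induction S using Nat.strong_induction_on with
    | _ S ih =>
      intro n hn hS
      by_cases hone : ∀ j, n j = 1
      · have hne : n = fun _ => 1 := funext hone
        refine hpop n 0 ?_
        rw [h0, hne]; rfl
      · push_neg at hone
        obtain ⟨j, hj⟩ := hone
        have hj2 : 2 ≤ n j := by have := hn j; omega
        set n' := Function.update n j (n j - 1) with hn'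
        have hn'j : n' j = n j - 1 := by simp [hn']
        have hn'pos : ∀ i, 1 ≤ n' i := by
          intro i
          by_cases hi : i = j
          · subst hi; rw [hn'j]; omega
          · rw [hn', Function.update_of_ne hi]; exact hn i
        have hsum : (∑ i, n' i) < S := by
          rw [← hS, hn']
          rw [Finset.sum_update_of_mem (Finset.mem_univ j),
            Finset.sdiff_singleton_eq_erase,
            ← Finset.add_sum_erase Finset.univ n (Finset.mem_univ j)]
          omega
        obtain ⟨t, ht⟩ := ih _ hsum n' hn'pos rfl
        refine hpop n (t + 1) ?_
        rw [hpush]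
        right
        refine ⟨j, ?_⟩
        rw [ht, hn'j]
        have h1 : n j - 1 + 1 = n j := by omega
        rw [hn', h1, Function.update_idem, Function.update_eq_self]
  intro n hn
  exact key (∑ j, n j) n hn rfl
end

section
/- Let the search expand tuples in ℕ^k in order of a cost w that is strictly monotone along the child relation (single-coordinate increment). If at every step the search pops a minimum-cost element from the set of inserted-but-unpopped tuples and inserts the popped tuple's children, then for any tuple n₂ with w(n₂) < w(n₁), if n₁ is popped at some step, n₂ (and all ancestors of n₂) have already been popped at an earlier step. -/
/-- `n'` is obtained from `n` by incrementing one coordinate by 1. -/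
def TChild (k : ℕ) (n n' : Fin k → ℕ) : Prop :=
  ∃ j : Fin k, n' = Function.update n j (n j + 1)

/-- in a best-first search over ℕ^k (popping a minimum-cost
inserted-but-unpopped tuple and inserting its children) with a cost `w`
strictly monotone along the child relation, if `n₁` is popped at step `t` and
`w n₂ < w n₁` (for a tuple `n₂` with all coordinates ≥ 1), then `n₂` and all
of its ancestors were popped at earlier steps. -/
theorem stmt_5 (k : ℕ) (w : (Fin k → ℕ) → ℝ)
    (hmono : ∀ (n : Fin k → ℕ) (n' : Fin k → ℕ), TChild k n n' → w n < w n')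
    (pushed : ℕ → Set (Fin k → ℕ)) (popped : ℕ → Fin k → ℕ)
    (h0 : pushed 0 = {fun _ => 1})
    (hpush : ∀ s, pushed (s + 1) = pushed s ∪ {c | TChild k (popped s) c})
    (hmem : ∀ s, popped s ∈ pushed s)
    (hnodup : ∀ s t, s < t → popped s ≠ popped t)
    (hmin : ∀ s, ∀ m ∈ pushed s, (∀ u < s, popped u ≠ m) →
      w (popped s) ≤ w m)
    (t : ℕ) (n₁ n₂ : Fin k → ℕ) (hn₁ : popped t = n₁)
    (hge : ∀ j, 1 ≤ n₂ j) (hlt : w n₂ < w n₁) :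
    (∃ s < t, popped s = n₂) ∧
    (∀ a : Fin k → ℕ, Relation.ReflTransGen (TChild k) a n₂ →
      (∀ j, 1 ≤ a j) → ∃ s < t, popped s = a) := by
  subst hn₁
  have hsub : ∀ s u, s ≤ u → pushed s ⊆ pushed u := by
    intro s u hsu
    induction hsu with
    | refl => exact subset_rfl
    | @step m _ ih =>
      rw [hpush m]
      exact ih.trans Set.subset_union_left
  have hwle : ∀ a b : Fin k → ℕ, Relation.ReflTransGen (TChild k) a b → w a ≤ w b := by
    intro a b h
    induction h with
    | refl => exact le_refl _
    | tail _ h2 ih => exact ih.trans (le_of_lt (hmono _ _ h2))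
  have hfin : ∀ a : Fin k → ℕ, a ∈ pushed t → w a < w (popped t) →
      ∃ s < t, popped s = a := by
    intro a ha hwa
    by_contra hc
    push_neg at hc
    exact absurd (hmin t a ha (fun u hu => hc u hu)) (not_le.mpr hwa)
  have key : ∀ N (a : Fin k → ℕ), (∑ j, a j) = N → (∀ j, 1 ≤ a j) →
      w a < w (popped t) → ∃ s < t, popped s = a := by
    intro N
    induction N using Nat.strong_induction_on with
    | _ N ih =>
      intro a hsum hge1 hwa
      by_cases hone : ∀ j, a j = 1
      · have ha1 : a = fun _ => 1 := funext hone
        have hmem0 : a ∈ pushed 0 := by rw [h0, ha1]; rfl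
        exact hfin a (hsub 0 t (Nat.zero_le t) hmem0) hwa
      · push_neg at hone
        obtain ⟨j, hj⟩ := hone
        have hj2 : 2 ≤ a j := by have := hge1 j; omega
        set p := Function.update a j (a j - 1) with hp
        have hchild : TChild k p a := by
          refine ⟨j, funext fun i => ?_⟩
          by_cases hij : i = j
          · subst hij
            simp only [p, Function.update_self]
            omega
          · simp [p, Function.update_of_ne hij]
        have hpge : ∀ i, 1 ≤ p i := by
          intro i
          by_cases hij : i = j
          · subst hij; simp only [p, Function.update_self]; omega
          · simp only [p, Function.update_of_ne hij]; exact hge1 i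
        have e1 : ∑ i, p i = (a j - 1) + ∑ i ∈ Finset.univ \ {j}, a i :=
          Finset.sum_update_of_mem (Finset.mem_univ j) a (a j - 1)
        have e2 : ∑ i, a i = a j + ∑ i ∈ Finset.univ \ {j}, a i :=
          Finset.sum_update_of_mem (Finset.mem_univ j) a (a j) |>.symm.trans
            (by rw [Function.update_eq_self]) |>.symm
        have hsump : (∑ i, p i) < N := by omega
        have hwp : w p < w a := hmono p a hchild
        obtain ⟨s, hst, hps⟩ := ih _ hsump p rfl hpge (hwp.trans hwa)
        have hat : a ∈ pushed (s + 1) := by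
          rw [hpush s]
          exact Set.mem_union_right _ (by rw [hps]; exact hchild)
        exact hfin a (hsub (s + 1) t hst hat) hwa
  refine ⟨key _ n₂ rfl hge hlt, fun a ha hage => ?_⟩
  exact key _ a rfl hage (lt_of_le_of_lt (hwle a n₂ ha) hlt)
end

section
/- Suppose an algorithm maintains a list C of costs that grows over time, and a collection of index-tuples whose entries index into C; each time a tuple n with maximum index i_max is expanded, a new cost value strictly greater than C[i_max] (equivalently, greater than every element currently in C) is appended to C, and the children of n (single-coordinate increments of n) are created. If initially C has length 1 and the only tuple is (1,...,1), then at all times every index appearing in any created tuple is at most the current length of C. -/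
/-- validity of indexes: an algorithm maintains a growing cost
list `C` (of current length `len t`, 1-indexed) and a set `S t` of created
index-tuples. At each step a tuple `e t ∈ S t` is expanded: a new cost value
strictly greater than every element currently in `C` is appended (so the
length grows by one), and the children of `e t` (single-coordinate increments)
are created. If initially `len 0 = 1` and the only tuple is (1,...,1), then at
all times every index appearing in any created tuple is at most the current
length of `C`. -/
theorem stmt_6 (k : ℕ) (C : ℕ → ℕ → ℝ) (len : ℕ → ℕ)
    (S : ℕ → Set (Fin k → ℕ)) (e : ℕ → Fin k → ℕ)
    (hlen0 : len 0 = 1) (hS0 : S 0 = {fun _ => 1})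
    (he : ∀ t, e t ∈ S t)
    (hlen : ∀ t, len (t + 1) = len t + 1)
    (hCkeep : ∀ t i, 1 ≤ i → i ≤ len t → C (t + 1) i = C t i)
    (hCgrow : ∀ t i, 1 ≤ i → i ≤ len t → C t i < C (t + 1) (len t + 1))
    (hS : ∀ t, S (t + 1) = S t ∪
      {c | ∃ j : Fin k, c = Function.update (e t) j (e t j + 1)}) :
    ∀ t, ∀ n ∈ S t, ∀ j : Fin k, n j ≤ len t := by
  intro t
  induction t with
  | zero =>
    intro n hn j
    rw [hS0] at hn
    simp only [Set.mem_singleton_iff] at hn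
    simp [hn, hlen0]
  | succ t ih =>
    intro n hn j
    rw [hS t] at hn
    rw [hlen t]
    rcases hn with hn | ⟨i, rfl⟩
    · exact (ih n hn j).trans (Nat.le_succ _)
    · rcases eq_or_ne j i with rfl | hji
      · simpa using Nat.succ_le_succ (ih _ (he t) j)
      · rw [Function.update_of_ne hji]
        exact (ih _ (he t) j).trans (Nat.le_succ _)
end

section
/- In a best-first search over cost-tuples with an additive penalizing post-generation cost function—where expanding a tuple n produces programs p with w'(p) ≥ w(n), and each w'(p) is inserted into the sorted cost list C—the following invariant holds: when a tuple n₁ of minimum queue cost is expanded, every entry C[i] for i appearing in n₁ is final, i.e., no later-expanded tuple can produce a program whose cost would be inserted at or before position i in C. -/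
/-- finality invariant for penalizing post-generation cost
functions: let `C` be the sorted, non-negative cost list and
`w(n) = K + Σ_j C[n_j]` (with `K ≥ 0`) the tuple cost. If `n₁` has minimum
cost among the tuples in the queue `Q`, then no other tuple `n₂ ∈ Q` can
produce a program cost `c` (which, by the penalizing property, satisfies
`c ≥ w(n₂)`) lying strictly below `C[i]` for some index `i` appearing in `n₁`;
i.e., the entries of `C` referenced by `n₁` are final when `n₁` is expanded. -/
theorem stmt_11 (k : ℕ) (K : ℝ) (hK : 0 ≤ K) (C : ℕ → ℝ)
    (hCmono : Monotone C) (hCpos : ∀ i, 0 ≤ C i)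
    (Q : Set (Fin k → ℕ)) (n₁ : Fin k → ℕ) (hn₁ : n₁ ∈ Q)
    (hmin : ∀ m ∈ Q, (K + ∑ j, C (n₁ j)) ≤ K + ∑ j, C (m j)) :
    ¬ ∃ (n₂ : Fin k → ℕ) (c : ℝ), n₂ ∈ Q ∧ n₂ ≠ n₁ ∧
      (K + ∑ j, C (n₂ j)) ≤ c ∧ ∃ j : Fin k, c < C (n₁ j) := by
  rintro ⟨n₂, c, hn₂, -, hc, j, hj⟩
  have h1 : C (n₁ j) ≤ ∑ j', C (n₁ j') :=
    Finset.single_le_sum (fun i _ => hCpos (n₁ i)) (Finset.mem_univ j)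
  have h2 := hmin n₂ hn₂
  have h3 : C (n₁ j) ≤ c := by linarith
  linarith
end
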